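/- Let A ∈ ℂ^{n×n}, let 1 ≤ h < k ≤ n−1, let G_h, …, G_k be Givens rotations (G_i acting on rows i and i+1 with s_i ≠ 0 for i = h,…,k), set Q = G_h G_{h+1} ⋯ G_k, and let D ∈ ℝ^{n×n} be any real diagonal matrix. Then there exist vectors a, b ∈ ℂ^n and d ∈ ℝ^n such that R = t(QAQ^*) − Q (D + t(A)) Q^* satisfies R = diag(d) + t(ab^*); in particular R is Hermitian and 1-quasiseparable. -/

import Mathlib

open Matrix BigOperators Finset

/-- The operator `t`: `t(A)_{ij} = A_{ij}` for `i > j`, `conj (A_{ji})` for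
`i < j`, and `0` on the diagonal. -/
noncomputable def tOp {n : ℕ} (A : Matrix (Fin n) (Fin n) ℂ) :
    Matrix (Fin n) (Fin n) ℂ :=
  Matrix.of fun i j =>
    if j < i then A i j else if i < j then (starRingEnd ℂ) (A j i) else 0

/-- `A` is lower-quasiseparable of rank `k`. -/
noncomputable def lowQS {n : ℕ} (k : ℕ) (A : Matrix (Fin n) (Fin n) ℂ) : Prop :=
  ∀ i : ℕ, ∀ _hi : 0 < i, ∀ _hin : i < n,
    (Matrix.of fun (p : Fin (n - i)) (q : Fin i) =>
      A ⟨i + p.1, by have := p.2; omega⟩ ⟨q.1, by have := q.2; omega⟩).rank ≤ k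

/-- `A` is upper-quasiseparable of rank `k`. -/
noncomputable def upQS {n : ℕ} (k : ℕ) (A : Matrix (Fin n) (Fin n) ℂ) : Prop :=
  ∀ i : ℕ, ∀ _hi : 0 < i, ∀ _hin : i < n,
    (Matrix.of fun (p : Fin i) (q : Fin (n - i)) =>
      A ⟨p.1, by have := p.2; omega⟩ ⟨i + q.1, by have := q.2; omega⟩).rank ≤ k

/-- `G` is the Givens rotation acting on (0-indexed) rows `i` and `i+1` with
parameters `c ∈ ℝ`, `s ∈ ℂ`, `c² + |s|² = 1`. -/
def IsGivensAt {n : ℕ} (i : ℕ) (c : ℝ) (s : ℂ) (G : Matrix (Fin n) (Fin n) ℂ) : Prop :=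
  i + 1 < n ∧ c ^ 2 + ‖s‖ ^ 2 = 1 ∧
  ∀ p q : Fin n,
    G p q =
      if (p : ℕ) = i ∧ (q : ℕ) = i then (c : ℂ)
      else if (p : ℕ) = i ∧ (q : ℕ) = i + 1 then s
      else if (p : ℕ) = i + 1 ∧ (q : ℕ) = i then -((starRingEnd ℂ) s)
      else if (p : ℕ) = i + 1 ∧ (q : ℕ) = i + 1 then (c : ℂ)
      else if p = q then 1 else 0

/-- The ordered product `G a * G (a+1) * ⋯ * G b`. -/
noncomputable def rotProd {n : ℕ} (G : ℕ → Matrix (Fin n) (Fin n) ℂ) (a b : ℕ) :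
    Matrix (Fin n) (Fin n) ℂ :=
  ((List.range (b + 1 - a)).map (fun j => G (a + j))).prod
/-!
For `j < i` the entry `R i j` is `(Q W Qᴴ) i j` with `W = A - (D + t(A))`, which is upper
triangular. The product `Q = G_h ⋯ G_k` is upper Hessenberg, is the identity outside the window
of rows and columns `h, …, k + 1`, and, because every `s_i ≠ 0`, its upper triangular part on the
window is a rank-one matrix `u vᵀ`. Since `Q W` is again upper Hessenberg, row `j` of `Q` only
meets columns `q ≥ j` of `Q W` in `(Q W Qᴴ) i j`, whence `R i j = a i * conj (b j)`. As `R` is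
Hermitian, its diagonal is real and its upper part is the conjugate transpose of the lower one.
-/

section
variable {n : ℕ}

lemma tOp_apply_of_lt (X : Matrix (Fin n) (Fin n) ℂ) {i j : Fin n} (hji : j < i) :
    tOp X i j = X i j := by
  simp [tOp, hji]

lemma tOp_isHermitian (X : Matrix (Fin n) (Fin n) ℂ) : (tOp X).IsHermitian := by
  ext i j
  rcases lt_trichotomy i j with hij | rfl | hij
  · simp [tOp, hij, hij.not_gt]
  · simp [tOp]
  · simp [tOp, hij, hij.not_gt]

lemma sub_diagonal_add_tOp_apply_of_lt (A : Matrix (Fin n) (Fin n) ℂ) (d : Fin n → ℂ)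
    {p q : Fin n} (hqp : q < p) : (A - (diagonal d + tOp A)) p q = 0 := by
  simp [tOp_apply_of_lt A hqp, hqp.ne']

lemma rank_le_one_of_apply_eq_mul {m l R : Type*} [Fintype l] [CommRing R]
    [StrongRankCondition R] (M : Matrix m l R) (x : m → R) (y : l → R)
    (hM : ∀ i j, M i j = x i * y j) : M.rank ≤ 1 := by
  rw [show M = vecMulVec x y from Matrix.ext hM]
  exact rank_vecMulVec_le x y

lemma lowQS_one_of_apply_eq_mul {R : Matrix (Fin n) (Fin n) ℂ} (x y : Fin n → ℂ)
    (hR : ∀ i j : Fin n, j < i → R i j = x i * y j) : lowQS 1 R := fun i _ _ =>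
  rank_le_one_of_apply_eq_mul _ (fun p => x _) (fun q => y _) fun p q =>
    hR _ _ (by rw [Fin.mk_lt_mk]; omega)

lemma upQS_one_of_apply_eq_mul {R : Matrix (Fin n) (Fin n) ℂ} (x y : Fin n → ℂ)
    (hR : ∀ i j : Fin n, i < j → R i j = x i * y j) : upQS 1 R := fun i _ _ =>
  rank_le_one_of_apply_eq_mul _ (fun p => x _) (fun q => y _) fun p q =>
    hR _ _ (by rw [Fin.mk_lt_mk]; omega)

namespace Matrix.IsHermitian

variable {R : Matrix (Fin n) (Fin n) ℂ} {a b : Fin n → ℂ}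

lemma eq_diagonal_add_tOp_vecMulVec (hR : R.IsHermitian)
    (hlow : ∀ i j : Fin n, j < i → R i j = a i * star (b j)) :
    R = diagonal (fun i => ((R i i).re : ℂ)) + tOp (vecMulVec a fun j => starRingEnd ℂ (b j)) := by
  ext i j
  rcases lt_trichotomy j i with hji | rfl | hij
  · simp [tOp, hji, hji.ne', hlow i j hji, vecMulVec_apply]
  · simpa [tOp] using (Complex.conj_eq_iff_re.mp (hR.apply j j)).symm
  · rw [← hR.apply i j, hlow j i hij]
    simp [tOp, hij, hij.ne, hij.not_gt, vecMulVec_apply, mul_comm]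

lemma apply_eq_mul_of_lt (hR : R.IsHermitian)
    (hlow : ∀ i j : Fin n, j < i → R i j = a i * star (b j)) {i j : Fin n} (hij : i < j) :
    R i j = b i * star (a j) := by
  rw [← hR.apply i j, hlow j i hij, star_mul', star_star, mul_comm]

end Matrix.IsHermitian

end

section
variable {n : ℕ} {α : Type*}

lemma mul_apply_eq_zero_of_succ_lt [NonUnitalNonAssocSemiring α]
    {Q W : Matrix (Fin n) (Fin n) α} (hQ : ∀ p q : Fin n, (q : ℕ) + 1 < p → Q p q = 0)
    (hW : ∀ p q : Fin n, q < p → W p q = 0) {i q : Fin n} (hqi : (q : ℕ) + 1 < i) :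
    (Q * W) i q = 0 := by
  rw [mul_apply]
  refine Finset.sum_eq_zero fun p _ => ?_
  by_cases hpi : (p : ℕ) + 1 < i
  · rw [hQ i p hpi, zero_mul]
  · rw [hW p q (by rw [Fin.lt_def]; omega), mul_zero]

lemma mul_mul_conjTranspose_apply_of_lt [CommRing α] [StarRing α]
    {Q W : Matrix (Fin n) (Fin n) α} (S : Set (Fin n)) (u v : Fin n → α)
    (hQ_hess : ∀ p q : Fin n, (q : ℕ) + 1 < p → Q p q = 0)
    (hQ_one : ∀ p q : Fin n, p ∉ S ∨ q ∉ S → Q p q = (1 : Matrix (Fin n) (Fin n) α) p q)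
    (hQ_mul : ∀ j q : Fin n, j ∈ S → j ≤ q → Q j q = u j * v q)
    (hW : ∀ p q : Fin n, q < p → W p q = 0) {i j : Fin n} (hji : j < i) :
    (Q * W * Qᴴ) i j = (∑ q, (Q * W) i q * star (v q)) * star (S.indicator u j) := by
  have hQW {q : Fin n} : (q : ℕ) + 1 < i → (Q * W) i q = 0 :=
    mul_apply_eq_zero_of_succ_lt hQ_hess hW
  simp only [mul_apply (M := Q * W), conjTranspose_apply]
  by_cases hj : j ∈ S
  · rw [Set.indicator_of_mem hj, Finset.sum_mul]
    refine Finset.sum_congr rfl fun q _ => ?_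
    by_cases hqi : (q : ℕ) + 1 < i
    · simp [hQW hqi]
    · rw [hQ_mul j q hj (by rw [Fin.le_def]; omega), star_mul']
      ring
  · rw [Set.indicator_of_notMem hj, star_zero, mul_zero]
    refine Finset.sum_eq_zero fun q _ => ?_
    rw [hQ_one j q (Or.inl hj), one_apply]
    split_ifs with hjq
    · subst hjq
      suffices (Q * W) i j = 0 by rw [this, zero_mul]
      rw [mul_apply]
      refine Finset.sum_eq_zero fun p _ => ?_
      rcases lt_trichotomy p j with hpj | rfl | hjp
      · rw [hQ_hess i p (by rw [Fin.lt_def] at hpj hji; omega), zero_mul]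
      · rw [hQ_one i p (Or.inr hj), one_apply_ne hji.ne', zero_mul]
      · rw [hW p j hjp, mul_zero]
    · rw [star_zero, mul_zero]

end

lemma IsGivensAt.mul_apply {n i : ℕ} {c : ℝ} {s : ℂ} {G : Matrix (Fin n) (Fin n) ℂ}
    (hG : IsGivensAt i c s G) (M : Matrix (Fin n) (Fin n) ℂ) (p q : Fin n) :
    (M * G) p q =
      if (q : ℕ) = i then
        M p ⟨i, by have := hG.1; omega⟩ * c - M p ⟨i + 1, hG.1⟩ * starRingEnd ℂ s
      else if (q : ℕ) = i + 1 then
        M p ⟨i, by have := hG.1; omega⟩ * s + M p ⟨i + 1, hG.1⟩ * c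
      else M p q := by
  obtain ⟨hi, -, hGe⟩ := hG
  rw [Matrix.mul_apply]
  split_ifs with hq hq'
  · rw [Fintype.sum_eq_add ⟨i, by omega⟩ ⟨i + 1, hi⟩ (by simp [Fin.ext_iff]) fun r hr => ?_]
    · simp only [hGe, hq, and_self, ↓reduceIte, Nat.add_eq_left, one_ne_zero, and_true,
        Nat.left_eq_add, mul_neg]
      ring
    · simp only [Ne, Fin.ext_iff] at hr
      simp [hGe, hq, hr, Fin.ext_iff]
  · rw [Fintype.sum_eq_add ⟨i, by omega⟩ ⟨i + 1, hi⟩ (by simp [Fin.ext_iff]) fun r hr => ?_]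
    · simp [hGe, hq']
    · simp only [Ne, Fin.ext_iff] at hr
      simp [hGe, hq', hr, Fin.ext_iff]
  · rw [Fintype.sum_eq_single q fun r hr => ?_]
    · simp [hGe, hq, hq']
    · simp [hGe, hq, hq', hr]

/-- The entries of `G h * G (h + 1) * ⋯ * G (m - 1)`, which acts on rows and columns
`h, …, m`; the factors `c (p - 1)` and `c q` are to be read as `1` at `p = h` and `q = m`. -/
noncomputable def givensProdEntry (h m : ℕ) (c : ℕ → ℝ) (s : ℕ → ℂ) (p q : ℕ) : ℂ :=
  if h ≤ p ∧ p ≤ m ∧ h ≤ q ∧ q ≤ m then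
    if p = q + 1 then -starRingEnd ℂ (s q)
    else if p ≤ q then
      (if p = h then 1 else (c (p - 1) : ℂ)) * (if q = m then 1 else (c q : ℂ)) *
        ∏ l ∈ Ico p q, s l
    else 0
  else if p = q then 1 else 0

section
variable {h m : ℕ} {c : ℕ → ℝ} {s : ℕ → ℂ}

set_option maxHeartbeats 400000 in
lemma givensProdEntry_succ (hm : h ≤ m) (p q : ℕ) :
    givensProdEntry h (m + 1) c s p q =
      if q = m then
        givensProdEntry h m c s p m * c m - givensProdEntry h m c s p (m + 1) * starRingEnd ℂ (s m)
      else if q = m + 1 then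
        givensProdEntry h m c s p m * s m + givensProdEntry h m c s p (m + 1) * c m
      else givensProdEntry h m c s p q := by
  have htop {p : ℕ} (hp : p ≤ m) : ∏ l ∈ Ico p (m + 1), s l = (∏ l ∈ Ico p m, s l) * s m :=
    prod_Ico_succ_top hp s
  by_cases hqm : q = m
  · subst q
    rw [if_pos rfl]
    unfold givensProdEntry
    split_ifs <;> first | omega | rfl | ring1
  by_cases hqm' : q = m + 1
  · subst q
    rw [if_neg hqm, if_pos rfl]
    unfold givensProdEntry
    split_ifs <;> first
      | omega
      | rfl
      | ring1
      | (rw [htop (by omega)]; ring1)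
      | (obtain rfl : p = m + 1 := by omega
         simp)
  · rw [if_neg hqm, if_neg hqm']
    unfold givensProdEntry
    split_ifs <;> first | omega | rfl

lemma givensProdEntry_eq_zero_of_succ_lt {p q : ℕ} (hqp : q + 1 < p) :
    givensProdEntry h m c s p q = 0 := by
  unfold givensProdEntry
  split_ifs <;> first | rfl | omega

lemma givensProdEntry_of_outside_window {p q : ℕ}
    (hpq : ¬(h ≤ p ∧ p ≤ m) ∨ ¬(h ≤ q ∧ q ≤ m)) :
    givensProdEntry h m c s p q = if p = q then 1 else 0 := by
  unfold givensProdEntry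
  split_ifs <;> first | rfl | omega

lemma exists_givensProdEntry_eq_mul (hs : ∀ l, h ≤ l → l < m → s l ≠ 0) :
    ∃ u v : ℕ → ℂ, ∀ p q, h ≤ p → p ≤ m → p ≤ q → givensProdEntry h m c s p q = u p * v q := by
  -- `s p ⋯ s (q - 1) = P p / P q`
  set P : ℕ → ℂ := fun j => ∏ l ∈ Ico j m, s l
  have hP : ∀ j, h ≤ j → P j ≠ 0 := fun j hj =>
    prod_ne_zero_iff.mpr fun l hl => hs l (by simp at hl; omega) (by simp at hl; omega)
  refine ⟨fun p => (if p = h then 1 else (c (p - 1) : ℂ)) * P p,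
    fun q => if q ≤ m then (if q = m then 1 else (c q : ℂ)) / P q else 0,
    fun p q hp hpm hpq => ?_⟩
  by_cases hqm : q ≤ m
  · have hsplit : P p = (∏ l ∈ Ico p q, s l) * P q := (prod_Ico_consecutive s hpq hqm).symm
    rw [givensProdEntry, if_pos ⟨hp, hpm, hp.trans hpq, hqm⟩, if_neg (by omega), if_pos hpq]
    simp only [if_pos hqm, hsplit]
    field_simp [hP q (hp.trans hpq)]
  · rw [givensProdEntry_of_outside_window (Or.inr (by omega)), if_neg (by omega)]
    simp only [if_neg hqm, mul_zero]

end

section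
variable {n h : ℕ} {c : ℕ → ℝ} {s : ℕ → ℂ} {G : ℕ → Matrix (Fin n) (Fin n) ℂ}

lemma list_prod_givens_eq_givensProdEntry (L : ℕ)
    (hG : ∀ j < L, IsGivensAt (h + j) (c (h + j)) (s (h + j)) (G (h + j))) :
    ((List.range L).map fun j => G (h + j)).prod =
      of fun p q : Fin n => givensProdEntry h (h + L) c s p q := by
  induction L with
  | zero =>
    ext p q
    simp only [List.range_zero, List.map_nil, List.prod_nil, add_zero, one_apply, of_apply,
      givensProdEntry, Fin.ext_iff]
    split_ifs <;> first | omega | simp_all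
  | succ L ih =>
    ext p q
    rw [List.range_succ, List.map_append, List.prod_append, List.map_singleton,
      List.prod_singleton, ih fun j hj => hG j (by omega), (hG L (by omega)).mul_apply]
    simp only [of_apply]
    rw [← add_assoc, givensProdEntry_succ (Nat.le_add_right h L)]

variable {k : ℕ}

lemma rotProd_eq_givensProdEntry (hhk : h ≤ k)
    (hG : ∀ i, h ≤ i → i ≤ k → IsGivensAt i (c i) (s i) (G i)) :
    rotProd G h k = of fun p q : Fin n => givensProdEntry h (k + 1) c s p q := by
  rw [rotProd, list_prod_givens_eq_givensProdEntry _ fun j hj => hG (h + j) (by omega) (by omega),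
    Nat.add_sub_cancel' (by omega)]

lemma exists_rotProd_mul_mul_conjTranspose_apply_of_lt (hhk : h ≤ k)
    (hG : ∀ i, h ≤ i → i ≤ k → IsGivensAt i (c i) (s i) (G i)) (hs : ∀ i, h ≤ i → i ≤ k → s i ≠ 0)
    {W : Matrix (Fin n) (Fin n) ℂ} (hW : ∀ p q : Fin n, q < p → W p q = 0) :
    ∃ a b : Fin n → ℂ, ∀ i j : Fin n, j < i →
      (rotProd G h k * W * (rotProd G h k)ᴴ) i j = a i * star (b j) := by
  obtain ⟨u, v, huv⟩ :=
    exists_givensProdEntry_eq_mul (m := k + 1) (c := c) fun l hl hlk => hs l hl (by omega)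
  set S : Set (Fin n) := {p | h ≤ p ∧ p ≤ k + 1}
  refine ⟨fun i => ∑ q, (rotProd G h k * W) i q * star (v q), S.indicator fun p => u p,
    fun i j hji => mul_mul_conjTranspose_apply_of_lt S _ (fun q => v q) (fun p q hqp => ?_)
      (fun p q hpq => ?_) (fun p q hp hpq => ?_) hW hji⟩ <;>
    rw [rotProd_eq_givensProdEntry hhk hG, of_apply]
  · exact givensProdEntry_eq_zero_of_succ_lt hqp
  · simp [givensProdEntry_of_outside_window hpq, one_apply, Fin.ext_iff]
  · exact huv p q hp.1 hp.2 hpq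

end

theorem stmt_11_general (n h k : ℕ) (hhk : h < k)
    (c : ℕ → ℝ) (s : ℕ → ℂ) (G : ℕ → Matrix (Fin n) (Fin n) ℂ)
    (hG : ∀ i, h ≤ i → i ≤ k → IsGivensAt i (c i) (s i) (G i))
    (hs : ∀ i, h ≤ i → i ≤ k → s i ≠ 0)
    (A : Matrix (Fin n) (Fin n) ℂ) (dD : Fin n → ℝ) :
    let Q := rotProd G h k
    let R := tOp (Q * A * Qᴴ) -
      Q * (Matrix.diagonal (fun i => (dD i : ℂ)) + tOp A) * Qᴴ
    ∃ (a b : Fin n → ℂ) (d : Fin n → ℝ),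
      R = Matrix.diagonal (fun i => (d i : ℂ)) +
          tOp (Matrix.vecMulVec a (fun j => (starRingEnd ℂ) (b j))) ∧
      R.IsHermitian ∧ lowQS 1 R ∧ upQS 1 R := by
  intro Q R
  set B := diagonal (fun i => (dD i : ℂ)) + tOp A
  have hB : B.IsHermitian :=
    (isHermitian_diagonal_of_self_adjoint _ (funext fun i => Complex.conj_ofReal _)).add
      (tOp_isHermitian A)
  have hR : R.IsHermitian := (tOp_isHermitian _).sub (isHermitian_mul_mul_conjTranspose Q hB)
  obtain ⟨a, b, hab⟩ := exists_rotProd_mul_mul_conjTranspose_apply_of_lt hhk.le hG hs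
    (W := A - B) fun p q => sub_diagonal_add_tOp_apply_of_lt A _
  have hlow : ∀ i j : Fin n, j < i → R i j = a i * star (b j) := fun i j hji => by
    rw [← hab i j hji, mul_sub, sub_mul]
    exact congrArg (· - _) (tOp_apply_of_lt _ hji)
  exact ⟨a, b, _, hR.eq_diagonal_add_tOp_vecMulVec hlow, hR, lowQS_one_of_apply_eq_mul _ _ hlow,
    upQS_one_of_apply_eq_mul _ _ fun i j hij => hR.apply_eq_mul_of_lt hlow hij⟩

/-- Corollary 2.6 of the paper (0-indexed rotations on rows `h, …, k`):
for any real diagonal `D`, the residual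
`R = t(QAQᴴ) - Q (D + t(A)) Qᴴ` has the form `diag d + t(abᴴ)`;
in particular it is Hermitian and 1-quasiseparable. -/
theorem stmt_11 (n h k : ℕ) (hhk : h < k) (hk : k + 1 < n)
    (c : ℕ → ℝ) (s : ℕ → ℂ) (G : ℕ → Matrix (Fin n) (Fin n) ℂ)
    (hG : ∀ i, h ≤ i → i ≤ k → IsGivensAt i (c i) (s i) (G i))
    (hs : ∀ i, h ≤ i → i ≤ k → s i ≠ 0)
    (A : Matrix (Fin n) (Fin n) ℂ) (dD : Fin n → ℝ) :
    let Q := rotProd G h k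
    let R := tOp (Q * A * Qᴴ) -
      Q * (Matrix.diagonal (fun i => (dD i : ℂ)) + tOp A) * Qᴴ
    ∃ (a b : Fin n → ℂ) (d : Fin n → ℝ),
      R = Matrix.diagonal (fun i => (d i : ℂ)) +
          tOp (Matrix.vecMulVec a (fun j => (starRingEnd ℂ) (b j))) ∧
      R.IsHermitian ∧ lowQS 1 R ∧ upQS 1 R :=
  stmt_11_general n h k hhk c s G hG hs A dD
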